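/- Let μ be a Borel probability measure on Σ = {1,…,m}^ℕ and let δ ∈ (0,1). Then for μ-a.e. x ∈ Σ, limsup_{n→∞} (1/n) · log( μ([x_1⋯x_{⌈(1−δ)n⌉}]) / μ([x_1⋯x_n]) ) ≤ δ·log m, where ⌈·⌉ denotes the ceiling function. -/

import Mathlib

open MeasureTheory Filter Topology Metric
open scoped ENNReal NNReal

noncomputable section

namespace SelfAffineProj

/-- The word product `T_{x|n} = T_{x_1} ⋯ T_{x_n}`. -/
def wordProd {m d : ℕ} (T : Fin m → Matrix (Fin d) (Fin d) ℝ) (x : ℕ → Fin m) (n : ℕ) :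
    Matrix (Fin d) (Fin d) ℝ :=
  ((List.range n).map fun k => T (x k)).prod

/-- The cylinder `[x|n]` of sequences agreeing with `x` on the first `n` coordinates. -/
def cylinder {m : ℕ} (x : ℕ → Fin m) (n : ℕ) : Set (ℕ → Fin m) :=
  { y | ∀ k < n, y k = x k }

theorem _root_.Matrix.isHermitian_transpose_mul_self {d : ℕ} (M : Matrix (Fin d) (Fin d) ℝ) :
    (M.transpose * M).IsHermitian := by
  rw [← Matrix.conjTranspose_eq_transpose_of_trivial]
  exact Matrix.isHermitian_conjTranspose_mul_self M

/-- `sval M k` is the `(k+1)`-th largest singular value `α_{k+1}(M)` of `M`. -/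
def sval {d : ℕ} (M : Matrix (Fin d) (Fin d) ℝ) (k : Fin d) : ℝ :=
  Real.sqrt
    ((Matrix.isHermitian_transpose_mul_self M).eigenvalues
      (Tuple.sort (Matrix.isHermitian_transpose_mul_self M).eigenvalues k.rev))

/-- `svalN M i` is `α_{i+1}(M)` for `i < d`, junk value `0` otherwise. -/
def svalN {d : ℕ} (M : Matrix (Fin d) (Fin d) ℝ) (i : ℕ) : ℝ :=
  if h : i < d then sval M ⟨i, h⟩ else 0

/-- The singular value function `φ^s`. -/
def phi {d : ℕ} (s : ℝ) (M : Matrix (Fin d) (Fin d) ℝ) : ℝ :=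
  if s < (d : ℝ) then
    (∏ i ∈ Finset.range ⌊s⌋₊, svalN M i) * svalN M ⌊s⌋₊ ^ (s - (⌊s⌋₊ : ℝ))
  else |M.det| ^ (s / (d : ℝ))

/-- The singular value function extended to `s ∈ [0,∞]`, with `φ^∞ = 0`. -/
def phiE {d : ℕ} (s : ℝ≥0∞) (M : Matrix (Fin d) (Fin d) ℝ) : ℝ≥0∞ :=
  if s = ⊤ then 0 else ENNReal.ofReal (phi s.toReal M)

/-- The continuous linear map on Euclidean space induced by a matrix. -/
def mCLM {d : ℕ} (M : Matrix (Fin d) (Fin d) ℝ) :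
    EuclideanSpace ℝ (Fin d) →L[ℝ] EuclideanSpace ℝ (Fin d) :=
  Matrix.toEuclideanCLM (𝕜 := ℝ) M

/-- `seqComp F n = F 0 ∘ F 1 ∘ ⋯ ∘ F (n-1)`. -/
def seqComp {E : Type*} (F : ℕ → E → E) : ℕ → E → E
  | 0 => id
  | n + 1 => F 0 ∘ seqComp (fun k => F (k + 1)) n

/-- The coding map `π^a(x) = lim_n f^a_{x_1} ∘ ⋯ ∘ f^a_{x_n}(0)`. -/
def codingMap {m d : ℕ} (T : Fin m → Matrix (Fin d) (Fin d) ℝ)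
    (a : Fin m → EuclideanSpace ℝ (Fin d)) (x : ℕ → Fin m) : EuclideanSpace ℝ (Fin d) :=
  limUnder atTop fun n => seqComp (fun k y => mCLM (T (x k)) y + a (x k)) n 0

/-- `Z_M(r) = ∏_{k=1}^d min{r, α_k(M)}/α_k(M)`. -/
def Zmat {d : ℕ} (M : Matrix (Fin d) (Fin d) ℝ) (r : ℝ) : ℝ :=
  ∏ k : Fin d, min r (sval M k) / sval M k

/-- `Z_{x|n}(r)`. -/
def Zword {m d : ℕ} (T : Fin m → Matrix (Fin d) (Fin d) ℝ) (x : ℕ → Fin m) (n : ℕ)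
    (r : ℝ) : ℝ :=
  Zmat (wordProd T x n) r

/-- The length `|x ∧ y|` of the longest common initial segment of `x` and `y`. -/
def firstDiff {m : ℕ} (x y : ℕ → Fin m) : ℕ :=
  sInf { n | x n ≠ y n }

/-- `Z_{x ∧ y}(r)`, with the convention `Z_{x ∧ y}(r) = 1` for `x = y`. -/
def Zwedge {m d : ℕ} (T : Fin m → Matrix (Fin d) (Fin d) ℝ) (x y : ℕ → Fin m) (r : ℝ) : ℝ :=
  letI := Classical.dec (x = y)
  if x = y then 1 else Zword T x (firstDiff x y) r

/-- `G_μ(x,r) = ∫ Z_{x∧y}(r) dμ(y)`. -/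
def Gfun {m d : ℕ} (T : Fin m → Matrix (Fin d) (Fin d) ℝ) (μ : Measure (ℕ → Fin m))
    (x : ℕ → Fin m) (r : ℝ) : ℝ :=
  ∫ y, Zwedge T x y r ∂μ

/-- `D(μ,x) = limsup_{r→0} log G_μ(x,r)/log r`. -/
def Dfun {m d : ℕ} (T : Fin m → Matrix (Fin d) (Fin d) ℝ) (μ : Measure (ℕ → Fin m))
    (x : ℕ → Fin m) : ℝ≥0∞ :=
  limsup (fun r : ℝ => ENNReal.ofReal (Real.log (Gfun T μ x r) / Real.log r)) (𝓝[>] 0)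

/-- Lower local dimension of a measure on `ℝ^d` at a point. -/
def lowerLocalDim {d : ℕ} (η : Measure (EuclideanSpace ℝ (Fin d)))
    (z : EuclideanSpace ℝ (Fin d)) : ℝ≥0∞ :=
  liminf (fun r : ℝ => ENNReal.ofReal (Real.log (η (closedBall z r)).toReal / Real.log r))
    (𝓝[>] 0)

/-- Upper local dimension of a measure on `ℝ^d` at a point. -/
def upperLocalDim {d : ℕ} (η : Measure (EuclideanSpace ℝ (Fin d)))
    (z : EuclideanSpace ℝ (Fin d)) : ℝ≥0∞ :=
  limsup (fun r : ℝ => ENNReal.ofReal (Real.log (η (closedBall z r)).toReal / Real.log r))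
    (𝓝[>] 0)

/-- Lower Hausdorff dimension of a measure. -/
def lowerHausdorffDim {d : ℕ} (η : Measure (EuclideanSpace ℝ (Fin d))) : ℝ≥0∞ :=
  essInf (lowerLocalDim η) η

/-- Upper Hausdorff dimension of a measure. -/
def upperHausdorffDim {d : ℕ} (η : Measure (EuclideanSpace ℝ (Fin d))) : ℝ≥0∞ :=
  essSup (lowerLocalDim η) η

/-- Lower packing dimension of a measure. -/
def lowerPackingDim {d : ℕ} (η : Measure (EuclideanSpace ℝ (Fin d))) : ℝ≥0∞ :=
  essInf (upperLocalDim η) η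

/-- Upper packing dimension of a measure. -/
def upperPackingDim {d : ℕ} (η : Measure (EuclideanSpace ℝ (Fin d))) : ℝ≥0∞ :=
  essSup (upperLocalDim η) η

/-- A measure is exact dimensional if its local dimension exists a.e. and is a.e. constant. -/
def exactDimensional {d : ℕ} (η : Measure (EuclideanSpace ℝ (Fin d))) : Prop :=
  ∃ C : ℝ≥0∞, ∀ᵐ z ∂η, lowerLocalDim η z = C ∧ upperLocalDim η z = C

/-- Cylinder of a finite word given as a list. -/
def cylL {m : ℕ} (I : List (Fin m)) : Set (ℕ → Fin m) :=
  { y | ∀ (k : ℕ) (hk : k < I.length), y k = I.get ⟨k, hk⟩ }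

/-- Word product for a word given as a list. -/
def wordProdL {m d : ℕ} (T : Fin m → Matrix (Fin d) (Fin d) ℝ) (I : List (Fin m)) :
    Matrix (Fin d) (Fin d) ℝ :=
  (I.map T).prod

/-- `M^s_n(E)`: the Falconer net pre-measure at level `n`. -/
def netMeasureAux {m d : ℕ} (T : Fin m → Matrix (Fin d) (Fin d) ℝ) (s : ℝ)
    (E : Set (ℕ → Fin m)) (n : ℕ) : ℝ≥0∞ :=
  ⨅ (C : Set (List (Fin m))) (_ : ∀ I ∈ C, n ≤ I.length) (_ : E ⊆ ⋃ I ∈ C, cylL I),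
    ∑' I : C, ENNReal.ofReal (phi s (wordProdL T (I : List (Fin m))))

/-- `M^s(E) = lim_n M^s_n(E)`. -/
def netMeasure {m d : ℕ} (T : Fin m → Matrix (Fin d) (Fin d) ℝ) (s : ℝ)
    (E : Set (ℕ → Fin m)) : ℝ≥0∞ :=
  ⨆ n, netMeasureAux T s E n

/-- `dim_M E`. -/
def dimM {m d : ℕ} (T : Fin m → Matrix (Fin d) (Fin d) ℝ) (E : Set (ℕ → Fin m)) : ℝ :=
  sInf { s : ℝ | 0 ≤ s ∧ netMeasure T s E < ⊤ }

/-- The energy `∬ Z_{x∧y}(r) dμ(x) dμ(y)`. -/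
def energy {m d : ℕ} (T : Fin m → Matrix (Fin d) (Fin d) ℝ) (μ : Measure (ℕ → Fin m))
    (r : ℝ) : ℝ :=
  ∫ x, ∫ y, Zwedge T x y r ∂μ ∂μ

/-- The `r`-capacity `C_r(E)` of a set `E ⊆ Σ`. -/
def capFn {m d : ℕ} (T : Fin m → Matrix (Fin d) (Fin d) ℝ) (E : Set (ℕ → Fin m)) (r : ℝ) : ℝ :=
  (sInf { v : ℝ | ∃ μ : Measure (ℕ → Fin m),
      IsProbabilityMeasure μ ∧ μ Eᶜ = 0 ∧ v = energy T μ r })⁻¹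

/-- Lower capacity dimension. -/
def lowerCapDim {m d : ℕ} (T : Fin m → Matrix (Fin d) (Fin d) ℝ)
    (E : Set (ℕ → Fin m)) : ℝ≥0∞ :=
  liminf (fun r : ℝ => ENNReal.ofReal (Real.log (capFn T E r) / (-Real.log r))) (𝓝[>] 0)

/-- Upper capacity dimension. -/
def upperCapDim {m d : ℕ} (T : Fin m → Matrix (Fin d) (Fin d) ℝ)
    (E : Set (ℕ → Fin m)) : ℝ≥0∞ :=
  limsup (fun r : ℝ => ENNReal.ofReal (Real.log (capFn T E r) / (-Real.log r))) (𝓝[>] 0)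

/-- `N_r(F)`: the minimal number of sets of diameter at most `r` needed to cover `F`. -/
def coverNum {d : ℕ} (F : Set (EuclideanSpace ℝ (Fin d))) (r : ℝ) : ℝ≥0∞ :=
  ⨅ (C : Finset (Set (EuclideanSpace ℝ (Fin d)))) (_ : F ⊆ ⋃ s ∈ C, s)
    (_ : ∀ s ∈ C, Metric.diam s ≤ r), (C.card : ℝ≥0∞)

/-- Lower box-counting dimension. -/
def lowerBoxDim {d : ℕ} (F : Set (EuclideanSpace ℝ (Fin d))) : ℝ≥0∞ :=
  liminf (fun r : ℝ => ENNReal.ofReal (Real.log (coverNum F r).toReal / (-Real.log r))) (𝓝[>] 0)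

/-- Upper box-counting dimension. -/
def upperBoxDim {d : ℕ} (F : Set (EuclideanSpace ℝ (Fin d))) : ℝ≥0∞ :=
  limsup (fun r : ℝ => ENNReal.ofReal (Real.log (coverNum F r).toReal / (-Real.log r))) (𝓝[>] 0)

/-!
Fix `ε > 0`, let `k = ⌈(1-δ)n⌉` and `R = exp((δ log m + ε) n)`. The words `w` of length `n` with
`μ[w|k] > R μ[w]` have total mass at most `m^(n-k) / R ≤ exp(-ε n)`, because every word of
length `k` has exactly `m^(n-k)` extensions of length `n`. These bounds are summable, so by
Borel–Cantelli almost every `x` eventually satisfies `μ[x|k] ≤ R μ[x|n]`, which bounds the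
limsup by `δ log m + ε`; then let `ε ↓ 0` along a sequence.
-/

/-- The word `x|n`. -/
def truncate {m : ℕ} (n : ℕ) (x : ℕ → Fin m) : Fin n → Fin m := fun i => x i

section Cylinders

variable {m : ℕ}

lemma measurable_truncate (n : ℕ) : Measurable (truncate (m := m) n) :=
  measurable_pi_lambda _ fun _ => measurable_pi_apply _

lemma cylinder_eq_preimage_truncate (x : ℕ → Fin m) (n : ℕ) :
    cylinder x n = truncate n ⁻¹' {truncate n x} := by
  ext y
  simp only [cylinder, truncate, Set.mem_preimage, Set.mem_singleton_iff, funext_iff,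
    Fin.forall_iff]
  rfl

lemma cylinder_anti (x : ℕ → Fin m) : Antitone (cylinder x) :=
  fun _ _ hkn _ hy j hj => hy j (hj.trans_le hkn)

lemma sum_comp_castLE {α M : Type*} [Fintype α] [AddCommMonoid M] {k n : ℕ} (h : k ≤ n)
    (f : (Fin k → α) → M) :
    ∑ w : Fin n → α, f (fun i => w (Fin.castLE h i)) =
      Fintype.card α ^ (n - k) • ∑ v, f v := by
  obtain ⟨j, rfl⟩ := Nat.exists_eq_add_of_le h
  rw [← (Fin.appendEquiv k j).sum_comp, Fintype.sum_prod_type]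
  simp [Finset.smul_sum]

lemma mul_measure_setOf_lt_measure_cylinder_le (μ : Measure (ℕ → Fin m)) {k n : ℕ}
    (hkn : k ≤ n) (R : ℝ≥0∞) :
    R * μ {x | R * μ (cylinder x n) < μ (cylinder x k)} ≤ m ^ (n - k) * μ Set.univ := by
  classical
  set S : Finset (Fin n → Fin m) := Finset.univ.filter fun w =>
    R * μ (truncate n ⁻¹' {w}) < μ (truncate k ⁻¹' {fun i => w (Fin.castLE hkn i)})
  have hbad : {x | R * μ (cylinder x n) < μ (cylinder x k)} = truncate n ⁻¹' S := by
    ext x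
    simp only [cylinder_eq_preimage_truncate, Set.mem_ofPred_eq, Finset.coe_filter,
      Finset.mem_univ, true_and, Set.preimage_ofPred_eq, S]
    rfl
  have hfiber (l : ℕ) (v : Fin l → Fin m) : MeasurableSet (truncate l ⁻¹' {v}) :=
    measurable_truncate l (measurableSet_singleton v)
  calc R * μ {x | R * μ (cylinder x n) < μ (cylinder x k)}
      = ∑ w ∈ S, R * μ (truncate n ⁻¹' {w}) := by
        rw [hbad, ← sum_measure_preimage_singleton S fun w _ => hfiber n w, Finset.mul_sum]
    _ ≤ ∑ w ∈ S, μ (truncate k ⁻¹' {fun i => w (Fin.castLE hkn i)}) :=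
        Finset.sum_le_sum fun w hw => (Finset.mem_filter.1 hw).2.le
    _ ≤ ∑ w : Fin n → Fin m, μ (truncate k ⁻¹' {fun i => w (Fin.castLE hkn i)}) :=
        Finset.sum_le_sum_of_subset (Finset.subset_univ S)
    _ = m ^ (n - k) * μ Set.univ := by
        rw [sum_comp_castLE hkn fun v => μ (truncate k ⁻¹' {v}), nsmul_eq_mul,
          sum_measure_preimage_singleton _ fun v _ => hfiber k v]
        simp

end Cylinders

def logCylinderRatio {m : ℕ} (μ : Measure (ℕ → Fin m)) (δ : ℝ) (x : ℕ → Fin m) (n : ℕ) : ℝ :=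
  (1 / (n : ℝ)) *
    Real.log ((μ (cylinder x ⌈(1 - δ) * (n : ℝ)⌉₊)).toReal / (μ (cylinder x n)).toReal)

lemma ceil_one_sub_mul_le {δ : ℝ} (hδ : 0 ≤ δ) (n : ℕ) : ⌈(1 - δ) * (n : ℝ)⌉₊ ≤ n :=
  Nat.ceil_le.2 (by nlinarith [Nat.cast_nonneg (α := ℝ) n])

lemma sub_ceil_one_sub_mul_le {δ : ℝ} (hδ : 0 ≤ δ) (n : ℕ) :
    ((n - ⌈(1 - δ) * (n : ℝ)⌉₊ : ℕ) : ℝ) ≤ δ * n := by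
  rw [Nat.cast_sub (ceil_one_sub_mul_le hδ n)]
  linarith [Nat.le_ceil ((1 - δ) * (n : ℝ))]

/-- For `b = 0` this holds through the junk values `a / 0 = 0` and `log 0 = 0`. -/
lemma _root_.Real.log_div_nonneg_of_le {a b : ℝ} (hb : 0 ≤ b) (hba : b ≤ a) :
    0 ≤ Real.log (a / b) := by
  rcases hb.eq_or_lt with rfl | hb
  · simp
  · exact Real.log_nonneg ((one_le_div hb).2 hba)

lemma _root_.Real.log_div_le_of_le_exp_mul {a b y : ℝ} (ha : 0 ≤ a) (hy : 0 ≤ y)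
    (h : a ≤ Real.exp y * b) : Real.log (a / b) ≤ y := by
  rcases ha.eq_or_lt with rfl | ha
  · simpa using hy
  have hb : 0 < b := pos_of_mul_pos_right (ha.trans_le h) (Real.exp_pos y).le
  exact (Real.log_le_iff_le_exp (div_pos ha hb)).2 ((div_le_iff₀ hb).2 h)

section LogCylinderRatio

variable {m : ℕ} (μ : Measure (ℕ → Fin m)) [IsFiniteMeasure μ] {δ : ℝ}

lemma logCylinderRatio_nonneg (hδ : 0 ≤ δ) (x : ℕ → Fin m) (n : ℕ) :
    0 ≤ logCylinderRatio μ δ x n :=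
  mul_nonneg (by positivity) <| Real.log_div_nonneg_of_le ENNReal.toReal_nonneg <|
    ENNReal.toReal_mono (measure_ne_top μ _)
      (measure_mono (cylinder_anti x (ceil_one_sub_mul_le hδ n)))

lemma logCylinderRatio_le_of_measure_le {c : ℝ} (hc : 0 ≤ c) {x : ℕ → Fin m} {n : ℕ}
    (hn : 0 < n) (h : μ (cylinder x ⌈(1 - δ) * (n : ℝ)⌉₊) ≤
      ENNReal.ofReal (Real.exp (c * n)) * μ (cylinder x n)) :
    logCylinderRatio μ δ x n ≤ c := by
  have hle := ENNReal.toReal_mono (by finiteness) h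
  rw [ENNReal.toReal_mul, ENNReal.toReal_ofReal (Real.exp_pos _).le] at hle
  rw [logCylinderRatio, one_div_mul_eq_div, div_le_iff₀ (Nat.cast_pos.2 hn)]
  exact Real.log_div_le_of_le_exp_mul ENNReal.toReal_nonneg (by positivity) hle

end LogCylinderRatio

section BorelCantelli

variable {m : ℕ} (μ : Measure (ℕ → Fin m)) [IsProbabilityMeasure μ] {δ ε : ℝ}

lemma measure_setOf_lt_measure_cylinder_ceil_le (hm : 1 ≤ m) (hδ : 0 ≤ δ) (n : ℕ) :
    μ {x | ENNReal.ofReal (Real.exp ((δ * Real.log m + ε) * n)) * μ (cylinder x n)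
        < μ (cylinder x ⌈(1 - δ) * (n : ℝ)⌉₊)} ≤ ENNReal.ofReal (Real.exp (-ε)) ^ n := by
  set k := ⌈(1 - δ) * (n : ℝ)⌉₊
  set R := ENNReal.ofReal (Real.exp ((δ * Real.log m + ε) * n))
  have hR : R ≠ 0 := by simp [R, Real.exp_pos]
  refine (ENNReal.mul_le_mul_iff_right hR ENNReal.ofReal_ne_top).1 ?_
  calc R * μ _ ≤ m ^ (n - k) := by
        simpa using mul_measure_setOf_lt_measure_cylinder_le μ (ceil_one_sub_mul_le hδ n) R
    _ = ENNReal.ofReal ((m : ℝ) ^ ((n - k : ℕ) : ℝ)) := by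
        rw [Real.rpow_natCast, ← ENNReal.ofReal_natCast, ENNReal.ofReal_pow (Nat.cast_nonneg m)]
    _ ≤ ENNReal.ofReal ((m : ℝ) ^ (δ * n)) := by
        gcongr
        · exact_mod_cast hm
        · exact sub_ceil_one_sub_mul_le hδ n
    _ = R * ENNReal.ofReal (Real.exp (-ε)) ^ n := by
        rw [← ENNReal.ofReal_pow (Real.exp_pos _).le, ← ENNReal.ofReal_mul (Real.exp_pos _).le,
          ← Real.exp_nat_mul, ← Real.exp_add,
          Real.rpow_def_of_pos (Nat.cast_pos.2 hm)]
        ring_nf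

theorem ae_limsup_logCylinderRatio_le_add (hm : 1 ≤ m) (hδ : 0 ≤ δ) (hε : 0 < ε) :
    ∀ᵐ x ∂μ, limsup (logCylinderRatio μ δ x) atTop ≤ δ * Real.log m + ε := by
  have hsum : ∑' n : ℕ, ENNReal.ofReal (Real.exp (-ε)) ^ n ≠ ⊤ := by
    rw [ENNReal.tsum_geometric]
    refine ENNReal.inv_ne_top.2 (tsub_pos_of_lt ?_).ne'
    exact ENNReal.ofReal_lt_one.2 (Real.exp_lt_one_iff.2 (neg_neg_of_pos hε))
  have hc : 0 ≤ δ * Real.log m + ε := by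
    have := Real.log_natCast_nonneg m
    positivity
  filter_upwards [ae_eventually_notMem <| ne_top_of_le_ne_top hsum <|
    ENNReal.tsum_le_tsum fun n => measure_setOf_lt_measure_cylinder_ceil_le μ hm hδ n] with x hx
  refine limsup_le_of_le (isCoboundedUnder_le_of_le atTop (logCylinderRatio_nonneg μ hδ x)) ?_
  filter_upwards [hx, eventually_gt_atTop 0] with n hxn hn
  exact logCylinderRatio_le_of_measure_le μ hc hn (not_lt.1 hxn)

end BorelCantelli

lemma ae_le_of_forall_pos_ae_le_add {α : Type*} [MeasurableSpace α] {μ : Measure α}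
    {f : α → ℝ} {c : ℝ} (h : ∀ ε > 0, ∀ᵐ x ∂μ, f x ≤ c + ε) : ∀ᵐ x ∂μ, f x ≤ c := by
  filter_upwards [ae_all_iff.2 fun j : ℕ => h (1 / (j + 1)) (by positivity)] with x hx
  refine le_of_forall_pos_lt_add fun ε hε => ?_
  obtain ⟨j, hj⟩ := exists_nat_one_div_lt hε
  linarith [hx j]

theorem statement13 (m : ℕ) (hm : 1 ≤ m)
    (μ : Measure (ℕ → Fin m)) (hμ : IsProbabilityMeasure μ)
    (δ : ℝ) (hδ : δ ∈ Set.Ioo (0 : ℝ) 1) :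
    ∀ᵐ x ∂μ,
      limsup (fun n : ℕ =>
          (1 / (n : ℝ)) *
            Real.log ((μ (cylinder x ⌈(1 - δ) * (n : ℝ)⌉₊)).toReal /
              (μ (cylinder x n)).toReal)) atTop
        ≤ δ * Real.log m :=
  ae_le_of_forall_pos_ae_le_add fun _ hε =>
    ae_limsup_logCylinderRatio_le_add μ hm hδ.1.le hε

end SelfAffineProj
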